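/- arXiv:1911.09954 — 2 statements merged into one kernel-verified Lean document; each statement's English description precedes it below -/
import Mathlib

section
/- Let B be a doubling ball-basis in a measure space (X, M, μ) with hull constant K and doubling constant η. If F is measurable with μ(F) < μ(X)/4 and F' ⊆ F is bounded (contained in some ball), then there exists a finite or countable sequence of balls Bₖ such that: (i) F' ⊆ ⋃ₖ Bₖ up to a μ-null set and F' ∩ Bₖ ≠ ∅ for each k; (ii) Σₖ μ(Bₖ) ≤ 2ηK μ(F); (iii) μ(Bₖ ∩ F) ≤ μ(Bₖ)/2 for each k. -/
open MeasureTheory ENNReal Set Filter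

noncomputable section

/-- A ball-basis on a measure space, with hull constant `K` (conditions B1–B4). -/
structure BallBasis (X : Type*) [MeasurableSpace X] (μ : Measure X) where
  balls : Set (Set X)
  K : ℝ≥0∞
  K_pos : 0 < K
  K_lt_top : K < ∞
  meas : ∀ B ∈ balls, MeasurableSet B
  pos : ∀ B ∈ balls, 0 < μ B
  lt_top : ∀ B ∈ balls, μ B < ∞
  pair : ∀ x y : X, ∃ B ∈ balls, x ∈ B ∧ y ∈ B
  approx : ∀ E : Set X, MeasurableSet E → ∀ ε : ℝ≥0∞, 0 < ε →
    ∃ Bs : ℕ → Set X, (∀ k, Bs k ∈ balls) ∧ μ (symmDiff E (⋃ k, Bs k)) < ε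
  hull : Set X → Set X
  hull_mem : ∀ B ∈ balls, hull B ∈ balls
  hull_sub : ∀ B ∈ balls, ∀ A ∈ balls, μ A ≤ 2 * μ B → (A ∩ B).Nonempty → A ⊆ hull B
  hull_bound : ∀ B ∈ balls, μ (hull B) ≤ K * μ B

/-- The doubling property of a ball-basis, with doubling constant `η > 2`. -/
def BallBasis.Doubling {X : Type*} [MeasurableSpace X] {μ : Measure X}
    (𝓑 : BallBasis X μ) (η : ℝ≥0∞) : Prop :=
  2 < η ∧ ∀ A ∈ 𝓑.balls, μ A < μ (univ : Set X) / 2 →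
    ∃ B ∈ 𝓑.balls, A ⊆ B ∧ 2 * μ A ≤ μ B ∧ μ B ≤ η * μ A

variable {X : Type*} [MeasurableSpace X]

/-- Oscillation `OSC_E(f) = sup_{x,x' ∈ E} |f x − f x'|` of a real function, valued in `ℝ≥0∞`. -/
def osc (f : X → ℝ) (E : Set X) : ℝ≥0∞ :=
  ⨆ x ∈ E, ⨆ y ∈ E, ENNReal.ofReal (f x - f y)

/-- Oscillation of an `ℝ≥0∞`-valued function. -/
def eosc (F : X → ℝ≥0∞) (E : Set X) : ℝ≥0∞ :=
  ⨆ x ∈ E, ⨆ y ∈ E, (F x - F y)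

/-- `OSC_{B,α}(f)`: the infimum of `OSC_E(f)` over measurable `E ⊆ B` with `μ(E) ≥ α μ(B)`. -/
def OSCa (μ : Measure X) (f : X → ℝ) (B : Set X) (α : ℝ) : ℝ≥0∞ :=
  ⨅ (E : Set X) (_ : MeasurableSet E) (_ : E ⊆ B)
    (_ : ENNReal.ofReal α * μ B ≤ μ E), osc f E

/-- `OSC_{B,α}` for `ℝ≥0∞`-valued functions. -/
def eOSCa (μ : Measure X) (F : X → ℝ≥0∞) (B : Set X) (α : ℝ) : ℝ≥0∞ :=
  ⨅ (E : Set X) (_ : MeasurableSet E) (_ : E ⊆ B)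
    (_ : ENNReal.ofReal α * μ B ≤ μ E), eosc F E

/-- `INF_{B,α}(g)`: the infimum of `‖g‖_{L^∞(E)}` over measurable `E ⊆ B` with `μ(E) ≥ α μ(B)`. -/
def INFa (μ : Measure X) (g : X → ℝ) (B : Set X) (α : ℝ) : ℝ≥0∞ :=
  ⨅ (E : Set X) (_ : MeasurableSet E) (_ : E ⊆ B)
    (_ : ENNReal.ofReal α * μ B ≤ μ E),
      essSup (fun x => ENNReal.ofReal |g x|) (μ.restrict E)

/-- `INF_B(g) = essinf_{y ∈ B} |g y|`. -/
def eINF (μ : Measure X) (g : X → ℝ) (B : Set X) : ℝ≥0∞ :=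
  essInf (fun x => ENNReal.ofReal |g x|) (μ.restrict B)

/-- A density point of a set `F` with respect to a ball-basis. -/
def IsDensityPoint (μ : Measure X) (𝓑 : BallBasis X μ) (F : Set X) (x : X) : Prop :=
  x ∈ F ∧ ∀ γ : ℝ, 0 < γ → γ < 1 →
    ∃ B ∈ 𝓑.balls, x ∈ B ∧ ENNReal.ofReal γ * μ B < μ (B ∩ F)

/-- A median of `f` over `B`. -/
def IsMedian (μ : Measure X) (f : X → ℝ) (B : Set X) (m : ℝ) : Prop :=
  μ {x ∈ B | m < f x} ≤ μ B / 2 ∧ μ {x ∈ B | f x < m} ≤ μ B / 2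

/-- A median of an `ℝ≥0∞`-valued function over `B`. -/
def IsMedianE (μ : Measure X) (F : X → ℝ≥0∞) (B : Set X) (m : ℝ≥0∞) : Prop :=
  μ {x ∈ B | m < F x} ≤ μ B / 2 ∧ μ {x ∈ B | F x < m} ≤ μ B / 2

/-- `⟨f⟩_B = (μ(B)⁻¹ ∫_B |f|^r)^{1/r}`. -/
def avgPow (μ : Measure X) (f : X → ℝ) (B : Set X) (r : ℝ) : ℝ≥0∞ :=
  ((μ B)⁻¹ * ∫⁻ x in B, (ENNReal.ofReal |f x|) ^ r ∂μ) ^ (1 / r)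

/-- `f_B = μ(B)⁻¹ ∫_B f`. -/
def intAvg (μ : Measure X) (f : X → ℝ) (B : Set X) : ℝ :=
  (∫ x in B, f x ∂μ) / (μ B).toReal

/-- `⟨f⟩_{#,B} = (μ(B)⁻¹ ∫_B |f − f_B|^r)^{1/r}`. -/
def sharpAvg (μ : Measure X) (f : X → ℝ) (B : Set X) (r : ℝ) : ℝ≥0∞ :=
  ((μ B)⁻¹ * ∫⁻ x in B, (ENNReal.ofReal |f x - intAvg μ f B|) ^ r ∂μ) ^ (1 / r)

/-- `⟨f⟩*_B = sup_{A ∈ 𝓑, A ⊇ B} ⟨f⟩_A`. -/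
def starAvg (μ : Measure X) (𝓑 : BallBasis X μ) (f : X → ℝ) (B : Set X) (r : ℝ) : ℝ≥0∞ :=
  ⨆ (A : Set X) (_ : A ∈ 𝓑.balls) (_ : B ⊆ A), avgPow μ f A r

/-- `⟨f⟩*_{#,B} = sup_{A ∈ 𝓑, A ⊇ B} ⟨f⟩_{#,A}`. -/
def starSharp (μ : Measure X) (𝓑 : BallBasis X μ) (f : X → ℝ) (B : Set X) (r : ℝ) : ℝ≥0∞ :=
  ⨆ (A : Set X) (_ : A ∈ 𝓑.balls) (_ : B ⊆ A), sharpAvg μ f A r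

/-- The maximal function `M f(x) = sup_{B ∋ x} ⟨f⟩_B`. -/
def Mmax (μ : Measure X) (𝓑 : BallBasis X μ) (f : X → ℝ) (r : ℝ) (x : X) : ℝ≥0∞ :=
  ⨆ (B : Set X) (_ : B ∈ 𝓑.balls) (_ : x ∈ B), avgPow μ f B r

/-- The sharp maximal function `M_# f(x) = sup_{B ∋ x} ⟨f⟩_{#,B}`. -/
def Msharp (μ : Measure X) (𝓑 : BallBasis X μ) (f : X → ℝ) (r : ℝ) (x : X) : ℝ≥0∞ :=
  ⨆ (B : Set X) (_ : B ∈ 𝓑.balls) (_ : x ∈ B), sharpAvg μ f B r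

/-- The local sharp maximal function of Jawerth–Torchinsky,
`M_{#,α} f(x) = sup_{B ∋ x} OSC_{B,α}(f)`. -/
def Mla (μ : Measure X) (𝓑 : BallBasis X μ) (f : X → ℝ) (α : ℝ) (x : X) : ℝ≥0∞ :=
  ⨆ (B : Set X) (_ : B ∈ 𝓑.balls) (_ : x ∈ B), OSCa μ f B α

/-- `|a − b|` in `ℝ≥0∞`. -/
def ediff (a b : ℝ≥0∞) : ℝ≥0∞ := (a - b) ⊔ (b - a)

/-- A subadditive operator. -/
def SubadditiveOp (T : (X → ℝ) → (X → ℝ)) : Prop :=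
  (∀ (c : ℝ) (f : X → ℝ) (x : X), |T (c • f) x| = |c| * |T f x|) ∧
  (∀ (f g : X → ℝ) (x : X), |T (f + g) x| ≤ |T f x| + |T g x|)

/-- The localization property of a bounded oscillation (BO) operator, with constant `L`:
`OSC_B (T (f · 1_{X ∖ B*})) ≤ L ⟨f⟩*_B` for all `f ∈ L^r` and balls `B`. -/
def HasBOconst (μ : Measure X) (𝓑 : BallBasis X μ) (r : ℝ)
    (T : (X → ℝ) → (X → ℝ)) (L : ℝ≥0∞) : Prop :=
  ∀ f : X → ℝ, MemLp f (ENNReal.ofReal r) μ → ∀ B ∈ 𝓑.balls,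
    osc (T ((𝓑.hull B)ᶜ.indicator f)) B ≤ L * starAvg μ 𝓑 f B r

/-- The weak-`L^r` inequality for `T`, with norm `N`. -/
def WeakType (μ : Measure X) (r : ℝ) (T : (X → ℝ) → (X → ℝ)) (N : ℝ≥0∞) : Prop :=
  ∀ f : X → ℝ, MemLp f (ENNReal.ofReal r) μ → ∀ lam : ℝ, 0 < lam →
    μ {x | lam < |T f x|} ≤ (N / ENNReal.ofReal lam) ^ r *
      ∫⁻ x, (ENNReal.ofReal |f x|) ^ r ∂μ

/-!
A ball `P` meeting `F'` is a stopping ball if `μ P ≤ 2η μ(P ∩ F)` while its hull is sparse,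
`μ(P* ∩ F) ≤ μ(P*)/2`. Any ball in which `F` has density above `1/2` grows into a stopping ball
by alternately taking hulls and doubling: the measure doubles at each step, yet stays below
`2 μ(F) < μ(X)/2` as long as the hull is dense, so the process stops. The hulls of a disjoint
(Vitali) subfamily of stopping balls cover all stopping balls, and
`∑ μ(P_k*) ≤ K ∑ μ(P_k) ≤ 2ηK ∑ μ(P_k ∩ F) ≤ 2ηK μ(F)`. A point of `F'` outside these hulls
lies in no ball where `F` is dense; such points form a null set by a Lebesgue density argument:
approximate `F` by a union of balls `U` and cover the points by hulls of a Vitali subfamily of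
those balls, each of which is at least half outside `F`, so the points have measure
`≲ μ(F \ U) + K μ(U \ F)`.
The Vitali subfamilies are countable because every ball meeting the ball that contains `F'`
lies in the hull of one of countably many nested doubling balls of finite measure.
-/

theorem MeasureTheory.measure_le_two_mul_diff_of_measure_inter_le_half {μ : Measure X}
    {A F : Set X} (hF : MeasurableSet F) (hA : μ A ≠ ∞) (h : μ (A ∩ F) ≤ μ A / 2) :
    μ A ≤ 2 * μ (A \ F) := by
  have hhalf : μ A / 2 ≤ μ (A \ F) := by
    refine ENNReal.le_of_add_le_add_left (div_ne_top hA two_ne_zero) ?_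
    calc μ A / 2 + μ A / 2 = μ (A ∩ F) + μ (A \ F) := by
          rw [ENNReal.add_halves, measure_inter_add_sdiff A hF]
      _ ≤ μ A / 2 + μ (A \ F) := by gcongr
  calc μ A = 2 * (μ A / 2) := (ENNReal.mul_div_cancel two_ne_zero ofNat_ne_top).symm
    _ ≤ 2 * μ (A \ F) := by gcongr

namespace BallBasis

variable {μ : Measure X} (𝓑 : BallBasis X μ)

theorem subset_hull {A : Set X} (hA : A ∈ 𝓑.balls) : A ⊆ 𝓑.hull A :=
  𝓑.hull_sub A hA A hA (le_mul_of_one_le_left zero_le one_le_two)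
    (by simpa using nonempty_of_measure_ne_zero (𝓑.pos A hA).ne')

theorem countable_of_pairwiseDisjoint {T : Set (Set X)} (hT : T ⊆ 𝓑.balls)
    (hdisj : T.PairwiseDisjoint id) {U : ℕ → Set X} (hU : ∀ j, μ (U j) ≠ ∞)
    (hTU : ∀ A ∈ T, ∃ j, A ⊆ U j) : T.Countable := by
  have hcover : T ⊆ ⋃ j, {A ∈ T | A ⊆ U j} := fun A hA => by
    obtain ⟨j, hj⟩ := hTU A hA
    exact mem_iUnion.mpr ⟨j, hA, hj⟩
  refine (countable_iUnion fun j => ?_).mono hcover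
  have hpos := Measure.countable_meas_pos_of_disjoint_of_meas_iUnion_ne_top μ
    (As := fun A : {A ∈ T | A ⊆ U j} => (A : Set X)) (fun A => 𝓑.meas _ (hT A.2.1))
    (fun A B hAB => hdisj A.2.1 B.2.1 (Subtype.coe_injective.ne hAB))
    (ne_top_of_le_ne_top (hU j) (measure_mono (iUnion_subset fun A => A.2.2)))
  have hall : {A : {A ∈ T | A ⊆ U j} | 0 < μ (A : Set X)} = univ :=
    eq_univ_of_forall fun A => 𝓑.pos _ (hT A.2.1)
  rw [hall, countable_univ_iff] at hpos
  exact countable_coe_iff.mp hpos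

theorem exists_disjoint_subfamily_hull_cover {𝓕 : Set (Set X)} (h𝓕 : 𝓕 ⊆ 𝓑.balls)
    {M : ℝ≥0∞} (hM : M ≠ ∞) (hbd : ∀ B ∈ 𝓕, μ B ≤ M) {U : ℕ → Set X}
    (hU : ∀ j, μ (U j) ≠ ∞) (h𝓕U : ∀ B ∈ 𝓕, ∃ j, B ⊆ U j) :
    ∃ D ⊆ 𝓕, D.Countable ∧ D.PairwiseDisjoint id ∧ ∀ B ∈ 𝓕, ∃ A ∈ D, B ⊆ 𝓑.hull A := by
  obtain ⟨D, hD𝓕, hDdisj, hcov⟩ := Vitali.exists_disjoint_subfamily_covering_enlargement id 𝓕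
    (fun B => (μ B).toReal) 2 one_lt_two (fun _ _ => toReal_nonneg) M.toReal
    (fun B hB => toReal_mono hM (hbd B hB))
    (fun B hB => nonempty_of_measure_ne_zero (𝓑.pos B (h𝓕 hB)).ne')
  refine ⟨D, hD𝓕, 𝓑.countable_of_pairwiseDisjoint (hD𝓕.trans h𝓕) hDdisj hU
    (fun A hA => h𝓕U A (hD𝓕 hA)), hDdisj, fun B hB => ?_⟩
  obtain ⟨A, hA, hBA, hle⟩ := hcov B hB
  have hA𝓑 := h𝓕 (hD𝓕 hA)
  refine ⟨A, hA, 𝓑.hull_sub A hA𝓑 B (h𝓕 hB) ?_ hBA⟩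
  rwa [← toReal_ofNat, ← toReal_mul, toReal_le_toReal (𝓑.lt_top B (h𝓕 hB)).ne
    (mul_ne_top ofNat_ne_top (𝓑.lt_top A hA𝓑).ne)] at hle

theorem exists_countable_subfamily_hull_cover {𝓕 : Set (Set X)} (h𝓕 : 𝓕 ⊆ 𝓑.balls)
    {U : ℕ → Set X} (hU : ∀ j, μ (U j) ≠ ∞) (h𝓕U : ∀ B ∈ 𝓕, ∃ j, B ⊆ U j) :
    ∃ D ⊆ 𝓕, D.Countable ∧ ∀ B ∈ 𝓕, ∃ A ∈ D, B ⊆ 𝓑.hull A := by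
  have hlevel : ∀ j, ∃ D ⊆ {B ∈ 𝓕 | B ⊆ U j}, D.Countable ∧ D.PairwiseDisjoint id ∧
      ∀ B ∈ {B ∈ 𝓕 | B ⊆ U j}, ∃ A ∈ D, B ⊆ 𝓑.hull A := fun j =>
    𝓑.exists_disjoint_subfamily_hull_cover (fun B hB => h𝓕 hB.1) (hU j)
      (fun B hB => measure_mono hB.2) (fun _ => hU j) (fun B hB => ⟨0, hB.2⟩)
  choose D hD𝓕 hDc _ hDcov using hlevel
  refine ⟨⋃ j, D j, iUnion_subset fun j => (hD𝓕 j).trans (sep_subset _ _),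
    countable_iUnion hDc, fun B hB => ?_⟩
  obtain ⟨j, hj⟩ := h𝓕U B hB
  obtain ⟨A, hA, hBA⟩ := hDcov j B ⟨hB, hj⟩
  exact ⟨A, mem_iUnion.mpr ⟨j, hA⟩, hBA⟩

theorem tsum_measure_hull_le {D : Set (Set X)} (hD : D ⊆ 𝓑.balls) (hDc : D.Countable)
    (hDdisj : D.PairwiseDisjoint id) {G : Set X} (hG : MeasurableSet G) {c : ℝ≥0∞}
    (hc : ∀ A ∈ D, μ A ≤ c * μ (A ∩ G)) :
    ∑' A : D, μ (𝓑.hull A) ≤ c * 𝓑.K * μ G := by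
  calc ∑' A : D, μ (𝓑.hull A)
      ≤ ∑' A : D, c * 𝓑.K * μ (A ∩ G) := ENNReal.tsum_le_tsum fun A =>
        calc μ (𝓑.hull A) ≤ 𝓑.K * μ A := 𝓑.hull_bound _ (hD A.2)
          _ ≤ 𝓑.K * (c * μ (A ∩ G)) := by gcongr; exact hc A A.2
          _ = c * 𝓑.K * μ (A ∩ G) := by ring
    _ = c * 𝓑.K * μ (⋃ A ∈ D, A ∩ G) := by
      rw [ENNReal.tsum_mul_left, measure_biUnion (f := fun A => A ∩ G) hDc
        (fun A hA B hB hAB => (hDdisj hA hB hAB).mono inter_subset_left inter_subset_left)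
        (fun A hA => (𝓑.meas A (hD hA)).inter hG)]
    _ ≤ c * 𝓑.K * μ G := by gcongr; exact iUnion₂_subset fun _ _ => inter_subset_right

theorem measure_le_of_forall_density_le_half {F N : Set X} (hF : MeasurableSet F) (hNF : N ⊆ F)
    (hN : ∀ x ∈ N, ∀ A ∈ 𝓑.balls, x ∈ A → μ (A ∩ F) ≤ μ A / 2) {ε : ℝ≥0∞} (hε : 0 < ε)
    (hε' : ε ≠ ∞) : μ N ≤ ε + 2 * 𝓑.K * ε := by
  obtain ⟨Bs, hBs, happ⟩ := 𝓑.approx F hF ε hε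
  set U := ⋃ k, Bs k
  have hFU : μ (F \ U) < ε := (measure_mono fun x hx => Or.inl hx).trans_lt happ
  have hUF : μ (U \ F) < ε := (measure_mono fun x hx => Or.inr hx).trans_lt happ
  set 𝓕 := {B ∈ range Bs | (B ∩ N).Nonempty}
  have h𝓕 : 𝓕 ⊆ 𝓑.balls := by rintro _ ⟨⟨k, rfl⟩, -⟩; exact hBs k
  have h𝓕U : ∀ B ∈ 𝓕, B ⊆ U := by rintro _ ⟨⟨k, rfl⟩, -⟩; exact subset_iUnion Bs k
  have hsparse : ∀ B ∈ 𝓕, μ B ≤ 2 * μ (B ∩ (U \ F)) := by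
    intro B hB
    obtain ⟨x, hxB, hxN⟩ := hB.2
    calc μ B ≤ 2 * μ (B \ F) := measure_le_two_mul_diff_of_measure_inter_le_half hF
          (𝓑.lt_top B (h𝓕 hB)).ne (hN x hxN B (h𝓕 hB) hxB)
      _ ≤ 2 * μ (B ∩ (U \ F)) := by
          gcongr; exact fun y hy => ⟨hy.1, h𝓕U B hB hy.1, hy.2⟩
  have hsmall : ∀ B ∈ 𝓕, μ B ≤ 2 * ε := fun B hB =>
    (hsparse B hB).trans (by gcongr; exact (measure_mono inter_subset_right).trans hUF.le)
  obtain ⟨D, hD𝓕, hDc, hDdisj, hDcov⟩ := 𝓑.exists_disjoint_subfamily_hull_cover h𝓕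
    (mul_ne_top ofNat_ne_top hε') hsmall (fun k => (𝓑.lt_top _ (hBs k)).ne)
    (by rintro _ ⟨⟨k, rfl⟩, -⟩; exact ⟨k, subset_rfl⟩)
  have hcover : N ⊆ (F \ U) ∪ ⋃ A ∈ D, 𝓑.hull A := by
    intro x hx
    by_cases hxU : x ∈ U
    · obtain ⟨k, hk⟩ := mem_iUnion.mp hxU
      obtain ⟨A, hA, hkA⟩ := hDcov (Bs k) ⟨mem_range_self k, x, hk, hx⟩
      exact Or.inr (mem_biUnion hA (hkA hk))
    · exact Or.inl ⟨hNF hx, hxU⟩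
  calc μ N ≤ μ (F \ U) + ∑' A : D, μ (𝓑.hull A) :=
        (measure_mono hcover).trans <| (measure_union_le _ _).trans <|
          add_le_add le_rfl (measure_biUnion_le μ hDc _)
    _ ≤ ε + 2 * 𝓑.K * μ (U \ F) := add_le_add hFU.le <|
        𝓑.tsum_measure_hull_le (hD𝓕.trans h𝓕) hDc hDdisj
          ((MeasurableSet.iUnion fun k => 𝓑.meas _ (hBs k)).diff hF) fun A hA => hsparse A (hD𝓕 hA)
    _ ≤ ε + 2 * 𝓑.K * ε := by gcongr

theorem measure_eq_zero_of_forall_density_le_half {F N : Set X} (hF : MeasurableSet F)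
    (hNF : N ⊆ F) (hN : ∀ x ∈ N, ∀ A ∈ 𝓑.balls, x ∈ A → μ (A ∩ F) ≤ μ A / 2) : μ N = 0 := by
  set c := 1 + 2 * 𝓑.K
  have hc0 : c ≠ 0 := (one_pos.trans_le le_self_add).ne'
  have hc : c ≠ ∞ := add_ne_top.2 ⟨one_ne_top, mul_ne_top ofNat_ne_top 𝓑.K_lt_top.ne⟩
  refine nonpos_iff_eq_zero.mp (ENNReal.le_of_forall_pos_le_add fun δ hδ _ => ?_)
  calc μ N ≤ δ / c + 2 * 𝓑.K * (δ / c) := 𝓑.measure_le_of_forall_density_le_half hF hNF hN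
        (ENNReal.div_pos (coe_ne_zero.2 hδ.ne') hc) (div_ne_top coe_ne_top hc0)
    _ = c * (δ / c) := by ring
    _ = 0 + δ := by rw [ENNReal.mul_div_cancel hc0 hc, zero_add]

theorem exists_superset_measure_ge {η : ℝ≥0∞} (hd : 𝓑.Doubling η) {B₀ : Set X}
    (hB₀ : B₀ ∈ 𝓑.balls) (n : ℕ) :
    ∃ C ∈ 𝓑.balls, B₀ ⊆ C ∧ min (2 ^ n * μ B₀) (μ univ / 2) ≤ μ C := by
  induction n with
  | zero => exact ⟨B₀, hB₀, subset_rfl, by simp⟩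
  | succ n ih =>
    obtain ⟨C, hC, hB₀C, hCμ⟩ := ih
    by_cases hsmall : μ C < μ univ / 2
    · obtain ⟨C', hC', hCC', h2C, -⟩ := hd.2 C hC hsmall
      have hn : 2 ^ n * μ B₀ ≤ μ C := by
        rcases min_choice (2 ^ n * μ B₀) (μ univ / 2) with h | h
        · exact h ▸ hCμ
        · exact absurd (h ▸ hCμ) (not_le.2 hsmall)
      refine ⟨C', hC', hB₀C.trans hCC', min_le_of_left_le ?_⟩
      calc 2 ^ (n + 1) * μ B₀ = 2 * (2 ^ n * μ B₀) := by ring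
        _ ≤ 2 * μ C := by gcongr
        _ ≤ μ C' := h2C
    · exact ⟨C, hC, hB₀C, min_le_of_right_le (not_lt.1 hsmall)⟩

theorem exists_seq_hull_cover {η : ℝ≥0∞} (hd : 𝓑.Doubling η) {B₀ : Set X}
    (hB₀ : B₀ ∈ 𝓑.balls) :
    ∃ C : ℕ → Set X, (∀ j, C j ∈ 𝓑.balls) ∧
      ∀ B ∈ 𝓑.balls, (B ∩ B₀).Nonempty → ∃ j, B ⊆ 𝓑.hull (C j) := by
  choose C hC hB₀C hCμ using 𝓑.exists_superset_measure_ge hd hB₀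
  refine ⟨C, hC, fun B hB hBB₀ => ?_⟩
  obtain ⟨n, hn⟩ := ENNReal.exists_nat_mul_gt (𝓑.pos B₀ hB₀).ne' (𝓑.lt_top B hB).ne
  have hle : μ B ≤ 2 * μ (C n) := by
    refine le_trans ?_ (mul_le_mul_right (hCμ n) 2)
    rcases min_choice (2 ^ n * μ B₀) (μ univ / 2) with h | h <;> rw [h]
    · calc μ B ≤ n * μ B₀ := hn.le
        _ ≤ 2 ^ n * μ B₀ := by gcongr; exact_mod_cast n.lt_two_pow_self.le
        _ ≤ 2 * (2 ^ n * μ B₀) := le_mul_of_one_le_left zero_le one_le_two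
    · rw [ENNReal.mul_div_cancel two_ne_zero ofNat_ne_top]
      exact measure_mono (subset_univ B)
  exact ⟨n, 𝓑.hull_sub _ (hC n) B hB hle (hBB₀.mono (inter_subset_inter_right B (hB₀C n)))⟩

theorem exists_doubling_superset_of_hull_dense {η : ℝ≥0∞} (hd : 𝓑.Doubling η) {F : Set X}
    (hF : μ F < μ univ / 4) {A : Set X} (hA : A ∈ 𝓑.balls)
    (hdense : μ (𝓑.hull A) / 2 < μ (𝓑.hull A ∩ F)) :
    ∃ A' ∈ 𝓑.balls, A ⊆ A' ∧ 2 * μ A ≤ μ A' ∧ μ A' ≤ 2 * η * μ (A' ∩ F) := by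
  have hdense' : μ (𝓑.hull A) < 2 * μ (𝓑.hull A ∩ F) := by
    rwa [ENNReal.div_lt_iff (Or.inl two_ne_zero) (Or.inl ofNat_ne_top), mul_comm] at hdense
  have hsmall : μ (𝓑.hull A) < μ univ / 2 :=
    calc μ (𝓑.hull A) < 2 * μ (𝓑.hull A ∩ F) := hdense'
      _ ≤ 2 * μ F := by gcongr; exact inter_subset_right
      _ < 2 * (μ univ / 4) := (ENNReal.mul_lt_mul_iff_right two_ne_zero ofNat_ne_top).2 hF
      _ = μ univ / 2 := by
        rw [← mul_div_assoc, show (4 : ℝ≥0∞) = 2 * 2 by norm_num,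
          ENNReal.mul_div_mul_left _ _ two_ne_zero ofNat_ne_top]
  obtain ⟨A', hA', hAA', h2A', hηA'⟩ := hd.2 _ (𝓑.hull_mem A hA) hsmall
  refine ⟨A', hA', (𝓑.subset_hull hA).trans hAA', ?_, ?_⟩
  · calc 2 * μ A ≤ 2 * μ (𝓑.hull A) := by gcongr; exact 𝓑.subset_hull hA
      _ ≤ μ A' := h2A'
  · calc μ A' ≤ η * μ (𝓑.hull A) := hηA'
      _ ≤ η * (2 * μ (𝓑.hull A ∩ F)) := by gcongr
      _ ≤ 2 * η * μ (A' ∩ F) := by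
        rw [mul_left_comm, ← mul_assoc]; gcongr

theorem exists_stopping_ball {η : ℝ≥0∞} (hd : 𝓑.Doubling η) {F : Set X}
    (hF : μ F < μ univ / 4) {A₀ : Set X} (hA₀ : A₀ ∈ 𝓑.balls)
    (hdense : μ A₀ / 2 < μ (A₀ ∩ F)) :
    ∃ P ∈ 𝓑.balls, A₀ ⊆ P ∧ μ P ≤ 2 * η * μ (P ∩ F) ∧
      μ (𝓑.hull P ∩ F) ≤ μ (𝓑.hull P) / 2 := by
  by_contra! hnot
  have hgrow : ∀ n : ℕ, ∃ P ∈ 𝓑.balls, A₀ ⊆ P ∧ μ P ≤ 2 * η * μ (P ∩ F) ∧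
      2 ^ n * μ A₀ ≤ μ P := by
    intro n
    induction n with
    | zero =>
      refine ⟨A₀, hA₀, subset_rfl, ?_, by simp⟩
      rw [ENNReal.div_lt_iff (Or.inl two_ne_zero) (Or.inl ofNat_ne_top), mul_comm] at hdense
      calc μ A₀ ≤ 2 * 1 * μ (A₀ ∩ F) := by rw [mul_one]; exact hdense.le
        _ ≤ 2 * η * μ (A₀ ∩ F) := by gcongr; exact one_le_two.trans hd.1.le
    | succ n ih =>
      obtain ⟨P, hP, hA₀P, hPF, hPμ⟩ := ih
      obtain ⟨P', hP', hPP', h2P', hP'F⟩ :=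
        𝓑.exists_doubling_superset_of_hull_dense hd hF hP (hnot P hP hA₀P hPF)
      refine ⟨P', hP', hA₀P.trans hPP', hP'F, ?_⟩
      calc 2 ^ (n + 1) * μ A₀ = 2 * (2 ^ n * μ A₀) := by ring
        _ ≤ 2 * μ P := by gcongr
        _ ≤ μ P' := h2P'
  have hFfin : 2 * μ F ≠ ∞ := mul_ne_top ofNat_ne_top (hF.trans_le le_top).ne
  obtain ⟨n, hn⟩ := ENNReal.exists_nat_mul_gt (𝓑.pos A₀ hA₀).ne' hFfin
  obtain ⟨P, hP, hA₀P, hPF, hPμ⟩ := hgrow n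
  have hPdense := hnot P hP hA₀P hPF
  rw [ENNReal.div_lt_iff (Or.inl two_ne_zero) (Or.inl ofNat_ne_top), mul_comm] at hPdense
  refine (hPμ.trans_lt ?_).false
  calc μ P ≤ μ (𝓑.hull P) := measure_mono (𝓑.subset_hull hP)
    _ < 2 * μ (𝓑.hull P ∩ F) := hPdense
    _ ≤ 2 * μ F := by gcongr; exact inter_subset_right
    _ < n * μ A₀ := hn
    _ ≤ 2 ^ n * μ A₀ := by gcongr; exact_mod_cast n.lt_two_pow_self.le

theorem exists_countable_hull_cover_tsum_le {𝓕 : Set (Set X)} (h𝓕 : 𝓕 ⊆ 𝓑.balls)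
    {U : ℕ → Set X} (hU : ∀ j, μ (U j) ≠ ∞) (h𝓕U : ∀ B ∈ 𝓕, ∃ j, B ⊆ U j) {G : Set X}
    (hG : MeasurableSet G) {c : ℝ≥0∞} (hc : ∀ B ∈ 𝓕, μ B ≤ c * μ (B ∩ G)) :
    ∃ D ⊆ 𝓕, D.Countable ∧ (∀ B ∈ 𝓕, ∃ A ∈ D, B ⊆ 𝓑.hull A) ∧
      ∑' A : D, μ (𝓑.hull A) ≤ c * 𝓑.K * μ G := by
  by_cases htop : c * 𝓑.K * μ G = ∞
  · obtain ⟨D, hD𝓕, hDc, hDcov⟩ := 𝓑.exists_countable_subfamily_hull_cover h𝓕 hU h𝓕U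
    exact ⟨D, hD𝓕, hDc, hDcov, htop ▸ le_top⟩
  have hM : c * μ G ≠ ∞ := fun h => htop <| by rw [mul_right_comm, h, top_mul 𝓑.K_pos.ne']
  obtain ⟨D, hD𝓕, hDc, hDdisj, hDcov⟩ := 𝓑.exists_disjoint_subfamily_hull_cover h𝓕 hM
    (fun B hB => (hc B hB).trans (by gcongr; exact inter_subset_right)) hU h𝓕U
  exact ⟨D, hD𝓕, hDc, hDcov,
    𝓑.tsum_measure_hull_le (hD𝓕.trans h𝓕) hDc hDdisj hG fun A hA => hc A (hD𝓕 hA)⟩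

end BallBasis

theorem balanced_covering_lemma_general
    {X : Type*} [MeasurableSpace X] (μ : Measure X) (𝓑 : BallBasis X μ)
    (η : ℝ≥0∞) (hd : 𝓑.Doubling η)
    (F F' : Set X) (hFmeas : MeasurableSet F)
    (hF : μ F < μ (univ : Set X) / 4) (hsub : F' ⊆ F)
    (hbdd : ∃ B ∈ 𝓑.balls, F' ⊆ B) :
    ∃ s : Set (Set X), s.Countable ∧ s ⊆ 𝓑.balls ∧
      μ (F' \ ⋃₀ s) = 0 ∧
      (∀ B ∈ s, (F' ∩ B).Nonempty) ∧
      (∑' B : s, μ (B : Set X)) ≤ 2 * η * 𝓑.K * μ F ∧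
      (∀ B ∈ s, μ (B ∩ F) ≤ μ B / 2) := by
  obtain ⟨B₀, hB₀, hF'B₀⟩ := hbdd
  obtain ⟨C, hC, hCcov⟩ := 𝓑.exists_seq_hull_cover hd hB₀
  set 𝓢 := {P ∈ 𝓑.balls | (F' ∩ P).Nonempty ∧ μ P ≤ 2 * η * μ (P ∩ F) ∧
    μ (𝓑.hull P ∩ F) ≤ μ (𝓑.hull P) / 2}
  obtain ⟨D, hD𝓢, hDc, hDcov, hDsum⟩ := 𝓑.exists_countable_hull_cover_tsum_le (𝓕 := 𝓢)
    (fun P hP => hP.1) (fun j => (𝓑.lt_top _ (𝓑.hull_mem _ (hC j))).ne)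
    (fun P ⟨hP, ⟨x, hxF', hxP⟩, _⟩ => hCcov P hP ⟨x, hxP, hF'B₀ hxF'⟩) hFmeas
    fun P hP => hP.2.2.1
  refine ⟨𝓑.hull '' D, hDc.image _, image_subset_iff.2 fun A hA => 𝓑.hull_mem A (hD𝓢 hA).1,
    ?_, ?_, (ENNReal.tsum_le_tsum_comp_of_surjective imageFactorization_surjective _).trans hDsum,
    ?_⟩
  · refine 𝓑.measure_eq_zero_of_forall_density_le_half hFmeas (sdiff_subset.trans hsub)
      fun x hx A hA hxA => ?_
    by_contra! hdense
    obtain ⟨P, hP, hAP, hPF, hPsparse⟩ := 𝓑.exists_stopping_ball hd hF hA hdense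
    obtain ⟨A', hA'D, hPA'⟩ := hDcov P ⟨hP, ⟨x, hx.1, hAP hxA⟩, hPF, hPsparse⟩
    exact hx.2 ⟨_, mem_image_of_mem _ hA'D, hPA' (hAP hxA)⟩
  · rintro _ ⟨A, hA, rfl⟩
    obtain ⟨x, hxF', hxA⟩ := (hD𝓢 hA).2.1
    exact ⟨x, hxF', 𝓑.subset_hull (hD𝓢 hA).1 hxA⟩
  · rintro _ ⟨A, hA, rfl⟩
    exact (hD𝓢 hA).2.2.2

/-- balanced covering lemma. -/
theorem balanced_covering_lemma
    {X : Type*} [MeasurableSpace X] (μ : Measure X) (𝓑 : BallBasis X μ)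
    (η : ℝ≥0∞) (hd : 𝓑.Doubling η)
    (F F' : Set X) (hFmeas : MeasurableSet F) (hF'meas : MeasurableSet F')
    (hF : μ F < μ (univ : Set X) / 4) (hsub : F' ⊆ F)
    (hbdd : ∃ B ∈ 𝓑.balls, F' ⊆ B) :
    ∃ s : Set (Set X), s.Countable ∧ s ⊆ 𝓑.balls ∧
      μ (F' \ ⋃₀ s) = 0 ∧
      (∀ B ∈ s, (F' ∩ B).Nonempty) ∧
      (∑' B : s, μ (B : Set X)) ≤ 2 * η * 𝓑.K * μ F ∧
      (∀ B ∈ s, μ (B ∩ F) ≤ μ B / 2) :=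
  balanced_covering_lemma_general μ 𝓑 η hd F F' hFmeas hF hsub hbdd
end
end

section
/- Let (X, M, μ) be a measure space with a ball-basis B and 1 ≤ r < ∞. Then for every f ∈ L^r(X), every ball B ∈ B, and every 0 < α < 1, OSC_{B,α}(M f) ≤ C (1−α)^{−1/r} ⟨f⟩*_{#,B}, where M is the maximal operator M f(x) = sup_{B ∈ B, B ∋ x} (μ(B)⁻¹ ∫_B |f|^r)^{1/r} and C depends only on the ball-basis constant K. In particular, the maximal operator M is strongly dominated by the sharp maximal operator M_#. -/
open MeasureTheory ENNReal Set Filter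

noncomputable section

variable {X : Type*} [MeasurableSpace X]

/-! Fix `B`, its hull `B*`, and split off the local part `g = (f - f_{B*}) 1_{B*}`.
For `x, y ∈ B` a ball `A ∋ x` is either small, hence inside `B*`, where
`⟨f⟩_A ≤ ⟨g⟩_A + |f_{B*}| ≤ M g(x) + M f(y)`, or large, so that its hull `A*` contains `B` and
`⟨f⟩_A ≤ K^{1/r} ⟨f⟩_{#,A*} + |f_{A*}| ≤ K^{1/r} ⟨f⟩*_{#,B} + M f(y)`.
Hence `M f(x) - M f(y) ≤ K^{1/r} ⟨f⟩*_{#,B} + M g(x)`. By the Vitali covering lemma `M g ≤ λ`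
outside a set of measure at most `K ‖g‖_r^r / λ^r ≤ K² μ(B) (⟨f⟩*_{#,B})^r / λ^r`, which is
`(1 - α) μ(B)` for `λ = K^{2/r} (1 - α)^{-1/r} ⟨f⟩*_{#,B}`. -/

open ProbabilityTheory

variable {μ : Measure X}

theorem ENNReal.mul_div_div_le {a o : ℝ≥0∞} (b : ℝ≥0∞) (ho0 : o ≠ 0) (ho : o ≠ ∞) :
    a * b / (a / o) ≤ o * b := by
  rw [div_eq_mul_inv, ENNReal.inv_div (.inl ho) (.inl ho0), mul_comm a, mul_assoc, mul_comm o]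
  gcongr
  exact ENNReal.mul_div_le

theorem ENNReal.rpow_mul_add_rpow_le {K : ℝ≥0∞} (hK : K ≠ ∞) {r s : ℝ} (hr : 0 < r) (hs : 0 < s)
    (hs1 : s ≤ 1) (σ : ℝ≥0∞) :
    K ^ (1 / r) * σ + (K * K * σ ^ r / ENNReal.ofReal s) ^ (1 / r) ≤
      ENNReal.ofReal ((K ^ (1 / r) + (K * K) ^ (1 / r)).toReal * s ^ (-(1 / r))) * σ := by
  set t := (ENNReal.ofReal s)⁻¹ ^ (1 / r)
  have ht : 1 ≤ t := ENNReal.one_le_rpow (ENNReal.one_le_inv.2 (ENNReal.ofReal_le_one.2 hs1))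
    (by positivity)
  have h1r : (0 : ℝ) ≤ 1 / r := by positivity
  have hroot : (K * K * σ ^ r / ENNReal.ofReal s) ^ (1 / r) = (K * K) ^ (1 / r) * t * σ := by
    rw [show K * K * σ ^ r / ENNReal.ofReal s = K * K * (ENNReal.ofReal s)⁻¹ * σ ^ r by
        rw [div_eq_mul_inv]; ring,
      ENNReal.mul_rpow_of_nonneg _ _ h1r, ENNReal.mul_rpow_of_nonneg _ _ h1r, ← ENNReal.rpow_mul,
      mul_one_div_cancel hr.ne', ENNReal.rpow_one]
  have hC : ENNReal.ofReal ((K ^ (1 / r) + (K * K) ^ (1 / r)).toReal * s ^ (-(1 / r))) =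
      (K ^ (1 / r) + (K * K) ^ (1 / r)) * t := by
    rw [ENNReal.ofReal_mul ENNReal.toReal_nonneg, ENNReal.ofReal_toReal (by finiteness),
      ← ENNReal.ofReal_rpow_of_pos hs, ENNReal.rpow_neg, ← ENNReal.inv_rpow]
  rw [hroot, hC, add_mul, add_mul]
  gcongr
  exact le_mul_of_one_le_right zero_le ht

theorem eOSCa_le_eosc {F : X → ℝ≥0∞} {B E : Set X} {α : ℝ} (hE : MeasurableSet E) (hEB : E ⊆ B)
    (hμE : ENNReal.ofReal α * μ B ≤ μ E) : eOSCa μ F B α ≤ eosc F E :=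
  iInf₂_le_of_le E hE (iInf₂_le_of_le hEB hμE le_rfl)

theorem ofReal_mul_le_measure_sdiff {B U : Set X} {α : ℝ} (hα0 : 0 ≤ α) (hα1 : α ≤ 1)
    (hB : μ B ≠ ∞) (hU : μ U ≤ ENNReal.ofReal (1 - α) * μ B) :
    ENNReal.ofReal α * μ B ≤ μ (B \ U) := by
  have hsum : ENNReal.ofReal α * μ B + ENNReal.ofReal (1 - α) * μ B = μ B := by
    rw [← add_mul, ← ENNReal.ofReal_add hα0 (by linarith)]
    simp
  calc ENNReal.ofReal α * μ B = μ B - ENNReal.ofReal (1 - α) * μ B :=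
        ENNReal.eq_sub_of_add_eq (by finiteness) hsum
    _ ≤ μ B - μ U := tsub_le_tsub_left hU _
    _ ≤ μ (B \ U) := le_measure_sdiff

section Averages

variable {f : X → ℝ} {A : Set X} {r : ℝ}

theorem avgPow_eq_eLpNorm' : avgPow μ f A r = eLpNorm' f r μ[|A] := by
  simp only [avgPow, eLpNorm'_eq_lintegral_enorm, ProbabilityTheory.cond, lintegral_smul_measure,
    smul_eq_mul, Real.enorm_eq_ofReal_abs]

theorem intAvg_eq_integral_cond : intAvg μ f A = ∫ x, f x ∂μ[|A] := by
  rw [intAvg, ProbabilityTheory.cond, integral_smul_measure, smul_eq_mul, ENNReal.toReal_inv,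
    inv_mul_eq_div]

theorem setLIntegral_eq_mul_avgPow_rpow (h0 : μ A ≠ 0) (ht : μ A ≠ ∞) (hr : r ≠ 0) :
    ∫⁻ x in A, ENNReal.ofReal |f x| ^ r ∂μ = μ A * avgPow μ f A r ^ r := by
  rw [avgPow, ← ENNReal.rpow_mul, one_div_mul_cancel hr, ENNReal.rpow_one, ← mul_assoc,
    ENNReal.mul_inv_cancel h0 ht, one_mul]

theorem avgPow_congr {g : X → ℝ} (hA : MeasurableSet A) (h : EqOn f g A) :
    avgPow μ f A r = avgPow μ g A r := by
  rw [avgPow, avgPow, setLIntegral_congr_fun hA fun x hx => by rw [h hx]]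

theorem avgPow_le_avgPow_sub_add (h0 : μ A ≠ 0) (ht : μ A ≠ ∞)
    (hf : AEMeasurable f (μ.restrict A)) (hr : 1 ≤ r) (c : ℝ) :
    avgPow μ f A r ≤ avgPow μ (fun x => f x - c) A r + ENNReal.ofReal |c| := by
  have := cond_isProbabilityMeasure_of_finite h0 ht
  have hfc : AEStronglyMeasurable (fun x => f x - c) μ[|A] :=
    ((hf.sub_const c).smul_measure _).aestronglyMeasurable
  calc avgPow μ f A r = eLpNorm' ((fun x => f x - c) + fun _ => c) r μ[|A] := by
        rw [avgPow_eq_eLpNorm']; congr 1; ext x; simp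
    _ ≤ _ := eLpNorm'_add_le hfc aestronglyMeasurable_const hr
    _ = _ := by
        rw [avgPow_eq_eLpNorm', eLpNorm'_const _ (by linarith), measure_univ, ENNReal.one_rpow,
          mul_one, Real.enorm_eq_ofReal_abs]

theorem ofReal_abs_intAvg_le_avgPow (h0 : μ A ≠ 0) (ht : μ A ≠ ∞)
    (hf : AEMeasurable f (μ.restrict A)) (hr : 1 ≤ r) :
    ENNReal.ofReal |intAvg μ f A| ≤ avgPow μ f A r := by
  have := cond_isProbabilityMeasure_of_finite h0 ht
  calc ENNReal.ofReal |intAvg μ f A| = ‖∫ x, f x ∂μ[|A]‖ₑ := by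
        rw [intAvg_eq_integral_cond, Real.enorm_eq_ofReal_abs]
    _ ≤ eLpNorm' f 1 μ[|A] := by
        simpa [eLpNorm'_eq_lintegral_enorm] using enorm_integral_le_lintegral_enorm f
    _ ≤ avgPow μ f A r := by
        rw [avgPow_eq_eLpNorm']
        exact eLpNorm'_le_eLpNorm'_of_exponent_le one_pos hr _
          (hf.smul_measure _).aestronglyMeasurable

theorem avgPow_le_mul_avgPow_of_subset {A' : Set X} (h : A ⊆ A') {K : ℝ≥0∞}
    (hK : μ A' ≤ K * μ A) (h0 : μ A ≠ 0) (ht' : μ A' ≠ ∞) (hr : 0 < r) :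
    avgPow μ f A r ≤ K ^ (1 / r) * avgPow μ f A' r := by
  have hinv : (μ A)⁻¹ ≤ K * (μ A')⁻¹ := by
    rw [← div_eq_mul_inv, ENNReal.le_div_iff_mul_le (.inl (ne_bot_of_le_ne_bot h0
      (measure_mono h))) (.inl ht')]
    calc (μ A)⁻¹ * μ A' ≤ (μ A)⁻¹ * (K * μ A) := by gcongr
      _ = K := by rw [mul_comm K, ← mul_assoc,
          ENNReal.inv_mul_cancel h0 (ne_top_of_le_ne_top ht' (measure_mono h)), one_mul]
  rw [avgPow, avgPow, ← ENNReal.mul_rpow_of_nonneg _ _ (by positivity), ← mul_assoc]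
  gcongr

end Averages

theorem Set.PairwiseDisjoint.countable_of_setLIntegral_pos {u : Set (Set X)}
    (hu : u.PairwiseDisjoint id) (hm : ∀ b ∈ u, MeasurableSet b) {G : X → ℝ≥0∞}
    (hG : ∫⁻ x, G x ∂μ ≠ ∞) (hpos : ∀ b ∈ u, 0 < ∫⁻ x in b, G x ∂μ) : u.Countable := by
  have hcount := Measure.countable_meas_pos_of_disjoint_of_meas_iUnion_ne_top (μ.withDensity G)
    (As := fun b : u => (b : Set X)) (fun b => hm b b.2)
    (fun b c hbc => hu b.2 c.2 (Subtype.coe_ne_coe.2 hbc))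
    (ne_top_of_le_ne_top (by rwa [withDensity_apply _ .univ, Measure.restrict_univ])
      (measure_mono (subset_univ _)))
  have hall : {b : u | 0 < μ.withDensity G b} = univ :=
    eq_univ_of_forall fun b => by simpa [withDensity_apply _ (hm b b.2)] using hpos b b.2
  rw [hall] at hcount
  exact countable_coe_iff.1 (countable_univ_iff.1 hcount)

namespace BallBasis

variable (𝓑 : BallBasis X μ) {f g : X → ℝ} {r : ℝ} {A B : Set X}

theorem subset_hull_s9 (hB : B ∈ 𝓑.balls) : B ⊆ 𝓑.hull B :=
  𝓑.hull_sub B hB B hB (le_mul_of_one_le_left zero_le one_le_two)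
    (by simpa using nonempty_of_measure_ne_zero (𝓑.pos B hB).ne')

theorem avgPow_le_Mmax (hA : A ∈ 𝓑.balls) {x : X} (hx : x ∈ A) :
    avgPow μ f A r ≤ Mmax μ 𝓑 f r x :=
  le_iSup₂_of_le A hA (le_iSup_of_le hx le_rfl)

theorem sharpAvg_le_starSharp (hA : A ∈ 𝓑.balls) (hBA : B ⊆ A) :
    sharpAvg μ f A r ≤ starSharp μ 𝓑 f B r :=
  le_iSup₂_of_le A hA (le_iSup_of_le hBA le_rfl)

def localPart (f : X → ℝ) (B : Set X) : X → ℝ :=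
  (𝓑.hull B).indicator fun x => f x - intAvg μ f (𝓑.hull B)

theorem lintegral_localPart_le (hB : B ∈ 𝓑.balls) (hr : 0 < r) :
    ∫⁻ x, ENNReal.ofReal |𝓑.localPart f B x| ^ r ∂μ ≤
      𝓑.K * μ B * starSharp μ 𝓑 f B r ^ r := by
  have hB' := 𝓑.hull_mem B hB
  calc ∫⁻ x, ENNReal.ofReal |𝓑.localPart f B x| ^ r ∂μ
      = ∫⁻ x in 𝓑.hull B, ENNReal.ofReal |f x - intAvg μ f (𝓑.hull B)| ^ r ∂μ := by
        rw [← lintegral_indicator (𝓑.meas _ hB')]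
        congr 1 with x
        by_cases hx : x ∈ 𝓑.hull B <;>
          simp [localPart, hx, ENNReal.zero_rpow_of_pos hr]
    _ = μ (𝓑.hull B) * sharpAvg μ f (𝓑.hull B) r ^ r :=
        setLIntegral_eq_mul_avgPow_rpow (𝓑.pos _ hB').ne' (𝓑.lt_top _ hB').ne hr.ne'
    _ ≤ 𝓑.K * μ B * starSharp μ 𝓑 f B r ^ r := by
        gcongr
        · exact 𝓑.hull_bound B hB
        · exact 𝓑.sharpAvg_le_starSharp hB' (𝓑.subset_hull_s9 hB)

theorem avgPow_le_avgPow_sub_intAvg_add_Mmax (hf : AEMeasurable f μ) (hr : 1 ≤ r)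
    (hA : A ∈ 𝓑.balls) {A' : Set X} (hA' : A' ∈ 𝓑.balls) {y : X} (hy : y ∈ A') :
    avgPow μ f A r ≤ avgPow μ (fun x => f x - intAvg μ f A') A r + Mmax μ 𝓑 f r y := by
  refine (avgPow_le_avgPow_sub_add (𝓑.pos A hA).ne' (𝓑.lt_top A hA).ne hf.restrict hr
    (intAvg μ f A')).trans ?_
  gcongr
  exact (ofReal_abs_intAvg_le_avgPow (𝓑.pos A' hA').ne' (𝓑.lt_top A' hA').ne hf.restrict hr).trans
    (𝓑.avgPow_le_Mmax hA' hy)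

theorem avgPow_le_avgPow_localPart_add_Mmax (hf : AEMeasurable f μ) (hr : 1 ≤ r)
    (hB : B ∈ 𝓑.balls) (hA : A ∈ 𝓑.balls) (hAB : (A ∩ B).Nonempty) (hμ : μ A ≤ 2 * μ B)
    {y : X} (hy : y ∈ B) :
    avgPow μ f A r ≤ avgPow μ (𝓑.localPart f B) A r + Mmax μ 𝓑 f r y := by
  have hA_sub : A ⊆ 𝓑.hull B := 𝓑.hull_sub B hB A hA hμ hAB
  convert 𝓑.avgPow_le_avgPow_sub_intAvg_add_Mmax hf hr hA (𝓑.hull_mem B hB)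
    (𝓑.subset_hull_s9 hB hy) using 2
  exact avgPow_congr (𝓑.meas A hA) fun x hx => indicator_of_mem (hA_sub hx) _

theorem avgPow_le_starSharp_add_Mmax (hf : AEMeasurable f μ) (hr : 1 ≤ r)
    (hB : B ∈ 𝓑.balls) (hA : A ∈ 𝓑.balls) (hAB : (A ∩ B).Nonempty) (hμ : μ B ≤ 2 * μ A)
    {y : X} (hy : y ∈ B) :
    avgPow μ f A r ≤ 𝓑.K ^ (1 / r) * starSharp μ 𝓑 f B r + Mmax μ 𝓑 f r y := by
  have hA' := 𝓑.hull_mem A hA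
  have hB_sub : B ⊆ 𝓑.hull A := 𝓑.hull_sub A hA B hB hμ (inter_comm A B ▸ hAB)
  refine (𝓑.avgPow_le_avgPow_sub_intAvg_add_Mmax hf hr hA hA' (hB_sub hy)).trans ?_
  gcongr
  calc avgPow μ (fun x => f x - intAvg μ f (𝓑.hull A)) A r
      ≤ 𝓑.K ^ (1 / r) * sharpAvg μ f (𝓑.hull A) r :=
        avgPow_le_mul_avgPow_of_subset (𝓑.subset_hull_s9 hA) (𝓑.hull_bound A hA)
          (𝓑.pos A hA).ne' (𝓑.lt_top _ hA').ne (by linarith)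
    _ ≤ 𝓑.K ^ (1 / r) * starSharp μ 𝓑 f B r := by
        gcongr
        exact 𝓑.sharpAvg_le_starSharp hA' hB_sub

theorem Mmax_le_add_Mmax_localPart (hf : AEMeasurable f μ) (hr : 1 ≤ r) (hB : B ∈ 𝓑.balls)
    {x y : X} (hx : x ∈ B) (hy : y ∈ B) :
    Mmax μ 𝓑 f r x ≤
      𝓑.K ^ (1 / r) * starSharp μ 𝓑 f B r + Mmax μ 𝓑 (𝓑.localPart f B) r x +
        Mmax μ 𝓑 f r y := by
  refine iSup₂_le fun A hA => iSup_le fun hxA => ?_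
  have hAB : (A ∩ B).Nonempty := ⟨x, hxA, hx⟩
  rcases le_total (μ A) (2 * μ B) with hμ | hμ
  · calc avgPow μ f A r ≤ avgPow μ (𝓑.localPart f B) A r + Mmax μ 𝓑 f r y :=
          𝓑.avgPow_le_avgPow_localPart_add_Mmax hf hr hB hA hAB hμ hy
      _ ≤ _ := by gcongr; exact (𝓑.avgPow_le_Mmax hA hxA).trans le_add_self
  · have two_mul_le {a : ℝ≥0∞} : a ≤ 2 * a := le_mul_of_one_le_left zero_le one_le_two
    have hμ' : μ B ≤ 2 * μ A := two_mul_le.trans (hμ.trans two_mul_le)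
    calc avgPow μ f A r ≤ 𝓑.K ^ (1 / r) * starSharp μ 𝓑 f B r + Mmax μ 𝓑 f r y :=
          𝓑.avgPow_le_starSharp_add_Mmax hf hr hB hA hAB hμ' hy
      _ ≤ _ := by gcongr; exact le_self_add

theorem measure_biUnion_hull_le {G : X → ℝ≥0∞} {u : Set (Set X)} (hu : u.Countable)
    (hub : u ⊆ 𝓑.balls) (hdisj : u.PairwiseDisjoint id) {c : ℝ≥0∞} (hc0 : c ≠ 0) (hc : c ≠ ∞)
    (hG : ∀ b ∈ u, c * μ b ≤ ∫⁻ x in b, G x ∂μ) :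
    μ (⋃ b ∈ u, 𝓑.hull b) ≤ 𝓑.K * (∫⁻ x, G x ∂μ) / c := by
  rw [mul_div_assoc, ENNReal.div_eq_inv_mul]
  calc μ (⋃ b ∈ u, 𝓑.hull b) ≤ ∑' b : u, μ (𝓑.hull b) := measure_biUnion_le μ hu _
    _ ≤ ∑' b : u, 𝓑.K * (c⁻¹ * ∫⁻ x in b, G x ∂μ) := by
        refine ENNReal.tsum_le_tsum fun b => (𝓑.hull_bound b (hub b.2)).trans ?_
        gcongr
        rw [← ENNReal.div_eq_inv_mul, ENNReal.le_div_iff_mul_le (.inl hc0) (.inl hc), mul_comm]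
        exact hG b b.2
    _ = 𝓑.K * (c⁻¹ * ∫⁻ x in ⋃ b ∈ u, b, G x ∂μ) := by
        rw [ENNReal.tsum_mul_left, ENNReal.tsum_mul_left,
          lintegral_biUnion hu (fun b hb => 𝓑.meas b (hub hb)) hdisj]
    _ ≤ 𝓑.K * (c⁻¹ * ∫⁻ x, G x ∂μ) := by gcongr; exact Measure.restrict_le_self

theorem rpow_mul_measure_lt_setLIntegral {A : Set X} (hA : A ∈ 𝓑.balls) (hr : 0 < r)
    {lam : ℝ≥0∞} (hlam : lam < avgPow μ g A r) :
    lam ^ r * μ A < ∫⁻ x in A, ENNReal.ofReal |g x| ^ r ∂μ := by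
  rw [setLIntegral_eq_mul_avgPow_rpow (𝓑.pos A hA).ne' (𝓑.lt_top A hA).ne hr.ne', mul_comm (μ A)]
  exact ENNReal.mul_lt_mul_left (𝓑.pos A hA).ne' (𝓑.lt_top A hA).ne
    (ENNReal.rpow_lt_rpow hlam hr)

theorem exists_Mmax_le_outside_of_pos (hr : 0 < r)
    (hI : ∫⁻ x, ENNReal.ofReal |g x| ^ r ∂μ ≠ ∞) {lam : ℝ≥0∞} (hlam0 : lam ≠ 0) (hlam : lam ≠ ∞) :
    ∃ U, MeasurableSet U ∧ μ U ≤ 𝓑.K * (∫⁻ x, ENNReal.ofReal |g x| ^ r ∂μ) / lam ^ r ∧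
      ∀ x ∉ U, Mmax μ 𝓑 g r x ≤ lam := by
  set I := ∫⁻ x, ENNReal.ofReal |g x| ^ r ∂μ
  have hc0 : lam ^ r ≠ 0 := (ENNReal.rpow_pos (pos_iff_ne_zero.2 hlam0) hlam).ne'
  have hc : lam ^ r ≠ ∞ := ENNReal.rpow_ne_top_of_nonneg hr.le hlam
  set F := {A ∈ 𝓑.balls | lam < avgPow μ g A r}
  have hF : ∀ A ∈ F, lam ^ r * μ A < ∫⁻ x in A, ENNReal.ofReal |g x| ^ r ∂μ :=
    fun A hA => 𝓑.rpow_mul_measure_lt_setLIntegral hA.1 hr hA.2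
  have hFμ : ∀ A ∈ F, μ A ≤ I / lam ^ r := fun A hA => by
    rw [ENNReal.le_div_iff_mul_le (.inl hc0) (.inl hc), mul_comm]
    exact (hF A hA).le.trans (setLIntegral_le_lintegral _ _)
  obtain ⟨u, huF, hdisj, hcov⟩ := Vitali.exists_disjoint_subfamily_covering_enlargement id F
    (fun A => (μ A).toReal) 2 one_lt_two (fun _ _ => ENNReal.toReal_nonneg) (I / lam ^ r).toReal
    (fun A hA => ENNReal.toReal_mono (ENNReal.div_ne_top hI hc0) (hFμ A hA))
    (fun A hA => nonempty_of_measure_ne_zero (𝓑.pos A hA.1).ne')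
  have hub : u ⊆ 𝓑.balls := fun b hb => (huF hb).1
  have hu : u.Countable := hdisj.countable_of_setLIntegral_pos (fun b hb => 𝓑.meas b (hub hb)) hI
    fun b hb => zero_le.trans_lt (hF b (huF hb))
  refine ⟨⋃ b ∈ u, 𝓑.hull b, .biUnion hu fun b hb => 𝓑.meas _ (𝓑.hull_mem b (hub hb)),
    𝓑.measure_biUnion_hull_le hu hub hdisj hc0 hc fun b hb => (hF b (huF hb)).le, ?_⟩
  intro x hx
  refine iSup₂_le fun A hA => iSup_le fun hxA => ?_
  by_contra! hlt
  obtain ⟨b, hbu, hAb, hμ⟩ := hcov A ⟨hA, hlt⟩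
  have hμ' : μ A ≤ 2 * μ b := by
    rwa [← ENNReal.toReal_le_toReal (𝓑.lt_top A hA).ne
      (ENNReal.mul_ne_top ENNReal.ofNat_ne_top (𝓑.lt_top b (hub hbu)).ne), ENNReal.toReal_mul,
      ENNReal.toReal_ofNat]
  exact hx (mem_biUnion hbu (𝓑.hull_sub b (hub hbu) A hA hμ' hAb hxA))

theorem exists_Mmax_le_outside (hr : 0 < r)
    (hI : ∫⁻ x, ENNReal.ofReal |g x| ^ r ∂μ ≠ ∞) (lam : ℝ≥0∞) :
    ∃ U, MeasurableSet U ∧ μ U ≤ 𝓑.K * (∫⁻ x, ENNReal.ofReal |g x| ^ r ∂μ) / lam ^ r ∧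
      ∀ x ∉ U, Mmax μ 𝓑 g r x ≤ lam := by
  rcases eq_or_ne lam ∞ with rfl | hlam
  · exact ⟨∅, .empty, by simp, fun _ _ => le_top⟩
  rcases eq_or_ne lam 0 with rfl | hlam0
  · rcases eq_or_ne (∫⁻ x, ENNReal.ofReal |g x| ^ r ∂μ) 0 with hI0 | hI0
    · refine ⟨∅, .empty, by simp, fun x _ => iSup₂_le fun A _ => iSup_le fun _ => ?_⟩
      have hA0 : ∫⁻ x in A, ENNReal.ofReal |g x| ^ r ∂μ = 0 :=
        nonpos_iff_eq_zero.1 ((setLIntegral_le_lintegral A _).trans hI0.le)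
      rw [avgPow, hA0, mul_zero, ENNReal.zero_rpow_of_pos (by positivity)]
    · refine ⟨univ, .univ, ?_, fun x hx => absurd (mem_univ x) hx⟩
      rw [ENNReal.zero_rpow_of_pos hr, ENNReal.div_zero (mul_ne_zero 𝓑.K_pos.ne' hI0)]
      exact le_top
  exact 𝓑.exists_Mmax_le_outside_of_pos hr hI hlam0 hlam

theorem exists_subset_Mmax_localPart_le (hr : 0 < r) (hB : B ∈ 𝓑.balls)
    (hσ : starSharp μ 𝓑 f B r ≠ ∞) {α : ℝ} (hα0 : 0 ≤ α) (hα1 : α < 1) :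
    ∃ E ⊆ B, MeasurableSet E ∧ ENNReal.ofReal α * μ B ≤ μ E ∧
      ∀ x ∈ E, Mmax μ 𝓑 (𝓑.localPart f B) r x ≤
        (𝓑.K * 𝓑.K * starSharp μ 𝓑 f B r ^ r / ENNReal.ofReal (1 - α)) ^ (1 / r) := by
  set σ := starSharp μ 𝓑 f B r
  set o := ENNReal.ofReal (1 - α)
  have hI : ∫⁻ x, ENNReal.ofReal |𝓑.localPart f B x| ^ r ∂μ ≤ 𝓑.K * μ B * σ ^ r :=
    𝓑.lintegral_localPart_le hB hr
  have hμB := (𝓑.lt_top B hB).ne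
  have hσr : σ ^ r ≠ ∞ := ENNReal.rpow_ne_top_of_nonneg hr.le hσ
  have hI' := ne_top_of_le_ne_top (ENNReal.mul_ne_top (ENNReal.mul_ne_top 𝓑.K_lt_top.ne hμB) hσr) hI
  obtain ⟨U, hU, hμU, hMU⟩ :=
    𝓑.exists_Mmax_le_outside hr hI' ((𝓑.K * 𝓑.K * σ ^ r / o) ^ (1 / r))
  rw [← ENNReal.rpow_mul, one_div_mul_cancel hr.ne', ENNReal.rpow_one] at hμU
  have hμU' : μ U ≤ o * μ B :=
    calc μ U ≤ 𝓑.K * (𝓑.K * μ B * σ ^ r) / (𝓑.K * 𝓑.K * σ ^ r / o) := by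
          refine hμU.trans ?_
          gcongr
      _ = 𝓑.K * 𝓑.K * σ ^ r * μ B / (𝓑.K * 𝓑.K * σ ^ r / o) := by congr 1; ring
      _ ≤ o * μ B := ENNReal.mul_div_div_le _ (by simpa [o] using hα1) ENNReal.ofReal_ne_top
  exact ⟨B \ U, sdiff_subset, (𝓑.meas B hB).diff hU,
    ofReal_mul_le_measure_sdiff hα0 hα1.le hμB hμU', fun x hx => hMU x hx.2⟩

theorem eosc_Mmax_le (hf : AEMeasurable f μ) (hr : 1 ≤ r) {E : Set X} (hB : B ∈ 𝓑.balls)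
    (hEB : E ⊆ B) {lam : ℝ≥0∞}
    (hlam : ∀ x ∈ E, Mmax μ 𝓑 (𝓑.localPart f B) r x ≤ lam) :
    eosc (Mmax μ 𝓑 f r) E ≤ 𝓑.K ^ (1 / r) * starSharp μ 𝓑 f B r + lam :=
  iSup₂_le fun x hx => iSup₂_le fun y hy => tsub_le_iff_right.2 <|
    (𝓑.Mmax_le_add_Mmax_localPart hf hr hB (hEB hx) (hEB hy)).trans (by gcongr; exact hlam x hx)

end BallBasis

/-- oscillation bound for the maximal function by the sharp maximal
quantities (Theorem 2): `OSC_{B,α}(M f) ≤ C (1−α)^{−1/r} ⟨f⟩*_{#,B}`. -/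
theorem osc_maximal_le_starSharp
    {X : Type*} [MeasurableSpace X] (μ : Measure X) (𝓑 : BallBasis X μ)
    (r : ℝ) (hr : 1 ≤ r) :
    ∃ C : ℝ, 0 < C ∧
      ∀ f : X → ℝ, MemLp f (ENNReal.ofReal r) μ →
        ∀ B ∈ 𝓑.balls, ∀ α : ℝ, 0 < α → α < 1 →
          eOSCa μ (fun x => Mmax μ 𝓑 f r x) B α ≤
            ENNReal.ofReal (C * (1 - α) ^ (-(1 / r))) * starSharp μ 𝓑 f B r := by
  have hr0 : 0 < r := by linarith
  have hK := 𝓑.K_lt_top.ne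
  have hC : 0 < (𝓑.K ^ (1 / r) + (𝓑.K * 𝓑.K) ^ (1 / r)).toReal :=
    ENNReal.toReal_pos (add_pos_of_pos_of_nonneg (ENNReal.rpow_pos 𝓑.K_pos hK) zero_le).ne'
      (by finiteness)
  refine ⟨_, hC, fun f hf B hB α hα0 hα1 => ?_⟩
  set σ := starSharp μ 𝓑 f B r
  rcases eq_or_ne σ ∞ with hσ | hσ
  · rw [hσ, ENNReal.mul_top (ENNReal.ofReal_pos.2 (by positivity)).ne']
    exact le_top
  obtain ⟨E, hEB, hE, hμE, hME⟩ :=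
    𝓑.exists_subset_Mmax_localPart_le hr0 hB hσ hα0.le hα1
  calc eOSCa μ (fun x => Mmax μ 𝓑 f r x) B α ≤ eosc (Mmax μ 𝓑 f r) E :=
        eOSCa_le_eosc hE hEB hμE
    _ ≤ 𝓑.K ^ (1 / r) * σ + (𝓑.K * 𝓑.K * σ ^ r / ENNReal.ofReal (1 - α)) ^ (1 / r) :=
        𝓑.eosc_Mmax_le hf.aestronglyMeasurable.aemeasurable hr hB hEB hME
    _ ≤ _ := ENNReal.rpow_mul_add_rpow_le hK hr0 (by linarith) (by linarith) σ
end
end
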